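/- arXiv:math/0205157 — 4 statements merged into one kernel-verified Lean document; each statement's English description precedes it below -/
import Mathlib

section
/- Let Γ be a group acting transitively on finite nonempty sets Ω₁ and Ω₂, and let F be a finite subgroup of Γ such that some point of Ω₁ is fixed by every element of F, while no non-identity element of F fixes any point of Ω₂. Then for every orbit Ω of the diagonal action of Γ on Ω₁ × Ω₂, the product |Ω₁|·|F| divides |Ω|. -/
/-- Auxiliary: card of a sigma type over a fintype. -/
lemma nat_card_sigma {ι : Type*} [Fintype ι] (f : ι → Type*) [∀ i, Fintype (f i)] :
    Nat.card (Σ i, f i) = ∑ i, Nat.card (f i) := by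
  simp [Nat.card_eq_fintype_card, Fintype.card_sigma]

/-- If `Γ` acts transitively on finite nonempty sets `Ω₁`, `Ω₂`, and `F` is a finite
subgroup fixing a point of `Ω₁` pointwise while no non-identity element of `F` fixes any
point of `Ω₂`, then `|Ω₁|·|F|` divides the size of every orbit of the diagonal action on
`Ω₁ × Ω₂`. -/
theorem card_mul_card_dvd_orbit_card
    {Γ Ω₁ Ω₂ : Type*} [Group Γ] [MulAction Γ Ω₁] [MulAction Γ Ω₂]
    [Finite Ω₁] [Finite Ω₂] [Nonempty Ω₁] [Nonempty Ω₂]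
    (h₁ : MulAction.IsPretransitive Γ Ω₁) (h₂ : MulAction.IsPretransitive Γ Ω₂)
    (F : Subgroup Γ) (hF : Finite F)
    (hfix : ∃ a : Ω₁, ∀ γ ∈ F, γ • a = a)
    (hfree : ∀ γ ∈ F, γ ≠ 1 → ∀ y : Ω₂, γ • y ≠ y)
    (p : Ω₁ × Ω₂) :
    Nat.card Ω₁ * Nat.card F ∣ Nat.card (MulAction.orbit Γ p) := by
  classical
  obtain ⟨a, ha⟩ := hfix
  set O := MulAction.orbit Γ p with hO
  letI : Fintype Ω₁ := Fintype.ofFinite _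
  letI : Fintype Ω₂ := Fintype.ofFinite _
  letI : Fintype O := Fintype.ofFinite _
  -- the fiber of the first projection over `b`
  let fib : Ω₁ → Type _ := fun b => {q : O // (q : Ω₁ × Ω₂).1 = b}
  letI : ∀ b, Fintype (fib b) := fun b => Fintype.ofFinite _
  -- all fibers are equivalent to the fiber over `a`
  have fib_card : ∀ b : Ω₁, Nat.card (fib b) = Nat.card (fib a) := by
    intro b
    obtain ⟨γ, hγ⟩ := h₁.exists_smul_eq b a
    refine Nat.card_congr ⟨fun q => ⟨γ • q.1, ?_⟩, fun q => ⟨γ⁻¹ • q.1, ?_⟩, ?_, ?_⟩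
    · show (γ • (q.1 : Ω₁ × Ω₂)).1 = a
      rw [Prod.smul_fst, q.2, hγ]
    · show (γ⁻¹ • (q.1 : Ω₁ × Ω₂)).1 = b
      rw [Prod.smul_fst, q.2, inv_smul_eq_iff, hγ]
    · intro q; apply Subtype.ext; apply Subtype.ext
      show ((γ⁻¹ • (γ • q.1) : O) : Ω₁ × Ω₂) = q.1
      rw [inv_smul_smul]
    · intro q; apply Subtype.ext; apply Subtype.ext
      show ((γ • (γ⁻¹ • q.1) : O) : Ω₁ × Ω₂) = q.1
      rw [smul_inv_smul]
  -- decompose the orbit along the fibers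
  have hOcard : Nat.card O = Nat.card Ω₁ * Nat.card (fib a) := by
    have e : O ≃ Σ b : Ω₁, fib b := (Equiv.sigmaFiberEquiv fun q : O => (q : Ω₁ × Ω₂).1).symm
    rw [Nat.card_congr e, nat_card_sigma]
    simp only [fib_card]
    simp [Finset.sum_const, Nat.card_eq_fintype_card, mul_comm]
  -- `F` acts on the fiber over `a`
  letI : MulAction F (fib a) :=
    { smul := fun γ q => ⟨(γ : Γ) • q.1, by
        show ((γ : Γ) • (q.1 : Ω₁ × Ω₂)).1 = a
        rw [Prod.smul_fst, q.2, ha γ.1 γ.2]⟩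
      one_smul := fun q => by
        apply Subtype.ext; apply Subtype.ext
        show ((1 : Γ) • (q.1 : Ω₁ × Ω₂)) = _
        rw [one_smul]
      mul_smul := fun γ δ q => by
        apply Subtype.ext; apply Subtype.ext
        show ((γ * δ : F) : Γ) • (q.1 : Ω₁ × Ω₂) = (γ : Γ) • (δ : Γ) • (q.1 : Ω₁ × Ω₂)
        rw [Subgroup.coe_mul, mul_smul] }
  -- the action is free
  have hstab : ∀ q : fib a, MulAction.stabilizer F q = ⊥ := by
    intro q
    rw [eq_bot_iff]
    intro γ hγ
    rw [MulAction.mem_stabilizer_iff] at hγ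
    rw [Subgroup.mem_bot]
    by_contra hne
    have h1 : (γ : Γ) ≠ 1 := fun h => hne (Subtype.ext (by simpa using h))
    have h2 : (γ : Γ) • (q.1 : Ω₁ × Ω₂) = (q.1 : Ω₁ × Ω₂) :=
      congrArg (fun x : fib a => ((x.1 : O) : Ω₁ × Ω₂)) hγ
    exact hfree γ γ.2 h1 (q.1 : Ω₁ × Ω₂).2 (congrArg Prod.snd h2)
  -- hence `|F|` divides the cardinality of the fiber
  letI : Fintype (MulAction.orbitRel.Quotient F (fib a)) := Fintype.ofFinite _
  have horb : ∀ q : fib a, Nat.card (MulAction.orbit F q) = Nat.card F := by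
    intro q
    rw [Nat.card_congr (MulAction.orbitEquivQuotientStabilizer F q), hstab q]
    exact Nat.card_congr (QuotientGroup.quotientBot (G := F)).toEquiv
  have hdvd : Nat.card F ∣ Nat.card (fib a) := by
    letI : ∀ ω : MulAction.orbitRel.Quotient F (fib a),
        Fintype (MulAction.orbit F ω.out) := fun ω => Fintype.ofFinite _
    have e := MulAction.selfEquivSigmaOrbits F (fib a)
    rw [Nat.card_congr e, nat_card_sigma]
    simp only [horb]
    rw [Finset.sum_const, Finset.card_univ, smul_eq_mul]
    exact dvd_mul_left _ _
  obtain ⟨k, hk⟩ := hdvd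
  exact ⟨k, by rw [hOcard, hk, mul_assoc]⟩
end

section
/- Let Γ be a group acting transitively on a finite nonempty set Ω such that the stabilizer of every point of Ω is a torsion-free subgroup of Γ. Then the order of every finite subgroup of Γ divides |Ω|. -/
/-- A monoid is torsion-free if no element other than `1` has finite order
(the Mathlib definition of December 2024, since removed). -/
def Monoid.IsTorsionFree (G : Type*) [Monoid G] : Prop :=
  ∀ g : G, g ≠ 1 → ¬IsOfFinOrder g

/-!
A finite subgroup `F` of `Γ` meets every point stabilizer trivially, since its elements have
finite order while the stabilizers are torsion free. So `F` acts freely on `Ω`, and `Ω` splits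
into `F`-orbits, each in bijection with `F`.
-/

namespace MulAction

variable {G α : Type*} [Group G] [MulAction G α]

theorem card_dvd_card_of_stabilizer_eq_bot (h : ∀ a : α, stabilizer G a = ⊥) :
    Nat.card G ∣ Nat.card α :=
  Dvd.intro_left _ (by rw [Nat.card_congr (selfEquivOrbitsQuotientProd h), Nat.card_prod])

theorem eq_one_of_isOfFinOrder_of_smul_eq {a : α}
    (ha : Monoid.IsTorsionFree (stabilizer G a)) {g : G} (hg : IsOfFinOrder g)
    (hga : g • a = a) : g = 1 := by
  by_contra hne
  exact ha ⟨g, hga⟩ (by simpa [Subtype.ext_iff] using hne) (Submonoid.isOfFinOrder_coe.mp hg)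

theorem stabilizer_subgroup_eq_bot_of_isMulTorsion {a : α}
    (ha : Monoid.IsTorsionFree (stabilizer G a)) {F : Subgroup G} (hF : IsMulTorsion F) :
    stabilizer F a = ⊥ :=
  (Subgroup.eq_bot_iff_forall _).mpr fun x hx ↦
    Subtype.ext (eq_one_of_isOfFinOrder_of_smul_eq ha (Submonoid.isOfFinOrder_coe.mpr (hF x)) hx)

end MulAction

theorem finite_subgroup_order_dvd_card_general
    {Γ Ω : Type*} [Group Γ] [MulAction Γ Ω]
    (hstab : ∀ a : Ω, Monoid.IsTorsionFree ↥(MulAction.stabilizer Γ a))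
    (F : Subgroup Γ) (hF : Finite F) :
    Nat.card F ∣ Nat.card Ω :=
  MulAction.card_dvd_card_of_stabilizer_eq_bot fun a ↦
    MulAction.stabilizer_subgroup_eq_bot_of_isMulTorsion (hstab a) isMulTorsion_of_finite

/-- If `Γ` acts transitively on a finite nonempty set `Ω` with all point stabilizers
torsion free, then the order of every finite subgroup of `Γ` divides `|Ω|`. -/
theorem finite_subgroup_order_dvd_card
    {Γ Ω : Type*} [Group Γ] [MulAction Γ Ω] [Finite Ω] [Nonempty Ω]
    (htrans : MulAction.IsPretransitive Γ Ω)
    (hstab : ∀ a : Ω, Monoid.IsTorsionFree ↥(MulAction.stabilizer Γ a))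
    (F : Subgroup Γ) (hF : Finite F) :
    Nat.card F ∣ Nat.card Ω :=
  finite_subgroup_order_dvd_card_general hstab F hF
end

section
/- Let (W,S) be a Coxeter system with W finite and S finite. Then the sum, over all strictly increasing chains S₀ ⊊ S₁ ⊊ ⋯ ⊊ S_k of subsets of S (for all k ≥ 0, including the one-term chains consisting of a single subset, and allowing S₀ = ∅), of (−1)^k / |⟨S₀⟩|, equals 1/|W|. Here ⟨S₀⟩ denotes the standard parabolic subgroup generated by S₀, with ⟨∅⟩ the trivial subgroup. -/
/-!
Appending `⊤` to a strict chain that does not end in `⊤`, and removing it from one that does, is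
an involution on strict chains which changes the length by one and keeps the first element. It
pairs off all nonempty chains except `[⊤]` into terms of opposite sign, so the alternating sum
collapses to the term of `[⊤]`. For subsets of `S` the top is `S` itself, and `⟨S⟩ = W`.
-/

namespace List

variable {α : Type*}

theorem finite_setOf_isChain_lt [Preorder α] [Finite α] :
    {l : List α | l.IsChain (· < ·)}.Finite := by
  have := Fintype.ofFinite α
  exact (finite_length_le α (Fintype.card α)).subset fun l hl => hl.sortedLT.nodup.length_le_card

section ToggleTop

variable [PartialOrder α] [OrderTop α] [DecidableEq α] {l : List α}

def toggleTop (l : List α) : List α :=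
  if l.getLast? = some ⊤ then l.dropLast else l ++ [⊤]

theorem toggleTop_eq_nil_iff : l.toggleTop = [] ↔ l = [⊤] := by
  constructor
  · intro h
    unfold toggleTop at h
    split_ifs at h with hlast
    · rw [← dropLast_append_getLast? ⊤ hlast, h, nil_append]
    · simp at h
  · rintro rfl
    simp [toggleTop]

theorem length_toggleTop :
    l.toggleTop.length + 1 = l.length ∨ l.toggleTop.length = l.length + 1 := by
  unfold toggleTop
  split_ifs with hlast
  · left
    have : l ≠ [] := by rintro rfl; simp at hlast
    have := length_pos_iff.mpr this
    simp only [length_dropLast]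
    omega
  · simp

theorem neg_one_pow_length_toggleTop {R : Type*} [Ring R] (hl_nil : l ≠ []) (hl_top : l ≠ [⊤]) :
    (-1 : R) ^ (l.toggleTop.length - 1) = -(-1) ^ (l.length - 1) := by
  have := length_pos_iff.mpr hl_nil
  have := length_pos_iff.mpr (toggleTop_eq_nil_iff.not.mpr hl_top)
  rcases l.length_toggleTop with hlen | hlen
  · rw [show l.length - 1 = l.toggleTop.length - 1 + 1 by omega, pow_succ, mul_neg_one, neg_neg]
  · rw [show l.toggleTop.length - 1 = l.length - 1 + 1 by omega, pow_succ, mul_neg_one]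

theorem headI_toggleTop [Inhabited α] (hl_nil : l ≠ []) (hl_top : l ≠ [⊤]) :
    l.toggleTop.headI = l.headI := by
  unfold toggleTop
  split_ifs with hlast
  · rcases l with _ | ⟨a, _ | ⟨b, t⟩⟩ <;> simp_all
  · rcases l with _ | ⟨a, t⟩ <;> simp_all

theorem IsChain.toggleTop (hl : l.IsChain (· < ·)) : l.toggleTop.IsChain (· < ·) := by
  unfold List.toggleTop
  split_ifs with hlast
  · exact hl.sublist l.dropLast_sublist
  · refine hl.append (isChain_singleton ⊤) fun x hx y hy => ?_
    simp only [head?_cons, Option.mem_def, Option.some_inj] at hy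
    subst hy
    exact lt_top_iff_ne_top.mpr fun hx' => hlast (hx' ▸ hx)

theorem IsChain.toggleTop_toggleTop (hl : l.IsChain (· < ·)) : l.toggleTop.toggleTop = l := by
  unfold List.toggleTop
  split_ifs with hlast hlast' hlast'
  · rw [← dropLast_append_getLast? ⊤ hlast] at hl
    have := (isChain_append.mp hl).2.2 ⊤ hlast' ⊤ rfl
    exact absurd this (lt_irrefl ⊤)
  · exact dropLast_append_getLast? ⊤ hlast
  all_goals simp_all

end ToggleTop

theorem finsum_mem_isChain_neg_one_pow_mul_headI [PartialOrder α] [OrderTop α] [Finite α]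
    [Inhabited α] {R : Type*} [Ring R] (g : α → R) :
    ∑ᶠ l ∈ {l : List α | l ≠ [] ∧ l.IsChain (· < ·)}, (-1 : R) ^ (l.length - 1) * g l.headI
      = g ⊤ := by
  classical
  set C := {l : List α | l ≠ [] ∧ l.IsChain (· < ·)}
  have hC : C.Finite := finite_setOf_isChain_lt.subset fun l hl => hl.2
  have htop : [⊤] ∈ hC.toFinset := by simp [C]
  rw [finsum_mem_eq_finite_toFinset_sum _ hC, ← Finset.sum_erase_add _ _ htop]
  have hmem {l} : l ∈ hC.toFinset.erase [⊤] ↔ l ≠ [⊤] ∧ l ≠ [] ∧ l.IsChain (· < ·) := by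
    simp [C]
  suffices ∑ l ∈ hC.toFinset.erase [⊤], (-1 : R) ^ (l.length - 1) * g l.headI = 0 by
    simp [this]
  refine Finset.sum_involution (fun l _ => l.toggleTop) ?_ ?_ ?_ ?_
  · intro l hl
    obtain ⟨hl_top, hl_nil, -⟩ := hmem.mp hl
    rw [headI_toggleTop hl_nil hl_top, neg_one_pow_length_toggleTop hl_nil hl_top, neg_mul,
      add_neg_cancel]
  · intro l _ _ h
    have := congrArg length h
    have := l.length_toggleTop
    omega
  · intro l hl
    obtain ⟨hl_top, hl_nil, hl⟩ := hmem.mp hl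
    refine hmem.mpr ⟨fun h => ?_, toggleTop_eq_nil_iff.not.mpr hl_top, hl.toggleTop⟩
    apply hl_nil
    rw [← hl.toggleTop_toggleTop, h, toggleTop_eq_nil_iff]
  · intro l hl
    exact (hmem.mp hl).2.2.toggleTop_toggleTop

end List

theorem coxeter_chain_sum_eq_inv_card_general
    {B : Type*} [Finite B] {W : Type*} [Group W]
    (M : CoxeterMatrix B) (cs : CoxeterSystem M W) :
    ∑ᶠ l ∈ {l : List (Finset B) | l ≠ [] ∧ List.Chain' (· ⊂ ·) l},
        ((-1 : ℚ) ^ (l.length - 1) /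
          (Nat.card ↥(Subgroup.closure (cs.simple '' ↑(l.headI))) : ℚ))
      = 1 / (Nat.card W : ℚ) := by
  have := Fintype.ofFinite B
  simp_rw [div_eq_mul_inv, one_mul]
  refine (List.finsum_mem_isChain_neg_one_pow_mul_headI
    fun s : Finset B => (Nat.card (Subgroup.closure (cs.simple '' s)) : ℚ)⁻¹).trans ?_
  rw [Finset.top_eq_univ, Finset.coe_univ, Set.image_univ, cs.subgroup_closure_range_simple,
    Subgroup.card_top]

/-- For a finite Coxeter group `(W,S)`, the sum over all strictly increasing chains
`S₀ ⊊ S₁ ⊊ ⋯ ⊊ S_k` of subsets of `S` (encoded as lists `[S₀, …, S_k]`) of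
`(−1)^k / |⟨S₀⟩|` equals `1/|W|`. -/
theorem coxeter_chain_sum_eq_inv_card
    {B : Type*} [Finite B] {W : Type*} [Group W] [Finite W]
    (M : CoxeterMatrix B) (cs : CoxeterSystem M W) :
    ∑ᶠ l ∈ {l : List (Finset B) | l ≠ [] ∧ List.Chain' (· ⊂ ·) l},
        ((-1 : ℚ) ^ (l.length - 1) /
          (Nat.card ↥(Subgroup.closure (cs.simple '' ↑(l.headI))) : ℚ))
      = 1 / (Nat.card W : ℚ) :=
  coxeter_chain_sum_eq_inv_card_general M cs
end

section
/- Let (W,S) be a Coxeter system with S finite and W infinite. For a subset T ⊆ S define E(T) to be the sum, over all strictly increasing chains S₀ ⊊ S₁ ⊊ ⋯ ⊊ S_k of subsets of T (k ≥ 0, allowing S₀ = ∅) such that the standard parabolic subgroup ⟨S_k⟩ is finite (equivalently, every ⟨S_i⟩ is finite), of (−1)^k / |⟨S₀⟩|. Then Σ_{Δ ⊆ S} (−1)^{|Δ|} · E(S ∖ Δ) = 0, the sum ranging over all subsets Δ of S. -/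
/-!
Exchanging the two sums, each chain `l` with top `S_k` contributes its weight times
`Σ_{Δ ∩ S_k = ∅} (−1)^{|Δ|} = Σ_{Δ ⊆ S ∖ S_k} (−1)^{|Δ|}`, which vanishes because
`S_k ≠ S`: the parabolic subgroup `⟨S⟩ = W` is infinite while `⟨S_k⟩` is finite.
-/

/-- `chainSum cs T` is the sum, over all strictly increasing chains `S₀ ⊊ ⋯ ⊊ S_k` of
subsets of `T` (encoded as lists `[S₀, …, S_k]`) whose top parabolic subgroup `⟨S_k⟩` is
finite, of `(−1)^k / |⟨S₀⟩|`. -/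
noncomputable def chainSum {B : Type*} {W : Type*} [Group W]
    (M : CoxeterMatrix B) (cs : CoxeterSystem M W) (T : Finset B) : ℚ :=
  ∑ᶠ l ∈ {l : List (Finset B) | l ≠ [] ∧ List.Chain' (· ⊂ ·) l ∧ (∀ A ∈ l, A ⊆ T) ∧
      (Subgroup.closure (cs.simple '' ↑(l.getLastI)) : Set W).Finite},
    ((-1 : ℚ) ^ (l.length - 1) /
      (Nat.card ↥(Subgroup.closure (cs.simple '' ↑(l.headI))) : ℚ))

theorem List.subset_getLastI_of_isChain_ssubset {α : Type*} {l : List (Finset α)}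
    (hl : l.IsChain (· ⊂ ·)) {A : Finset α} (hA : A ∈ l) : A ⊆ l.getLastI := by
  have hne : l ≠ [] := List.ne_nil_of_mem hA
  rw [List.getLastI_eq_getLast?_getD, List.getLast?_eq_getLast_of_ne_nil hne, Option.getD_some]
  rw [← List.dropLast_append_getLast hne, List.mem_append, List.mem_singleton] at hA
  rcases hA with hA | rfl
  · have hpair := hl.pairwise
    rw [← List.dropLast_append_getLast hne, List.pairwise_append] at hpair
    exact (hpair.2.2 A hA _ (List.mem_singleton_self _)).subset
  · exact subset_rfl

theorem List.getLastI_mem {α : Type*} [Inhabited α] {l : List α} (hl : l ≠ []) :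
    l.getLastI ∈ l := by
  rw [List.getLastI_eq_getLast?_getD, List.getLast?_eq_getLast_of_ne_nil hl]
  exact List.getLast_mem hl

theorem List.finite_setOf_isChain {α : Type*} [Finite α] (R : α → α → Prop) [Std.Irrefl R]
    [IsTrans α R] : {l : List α | l.IsChain R}.Finite := by
  have : Fintype α := Fintype.ofFinite α
  refine (List.finite_length_le α (Fintype.card α)).subset fun l hl => ?_
  exact List.Nodup.length_le_card (hl.pairwise.imp fun h => ne_of_irrefl h)

open Finset in
theorem Finset.sum_filter_disjoint_neg_one_pow_card {α : Type*} [Fintype α] [DecidableEq α]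
    {R : Type*} [CommRing R] {A : Finset α} (hA : A ≠ univ) :
    ∑ Δ with Disjoint A Δ, (-1 : R) ^ #Δ = 0 := by
  have hfilter : ({Δ | Disjoint A Δ} : Finset (Finset α)) = Aᶜ.powerset := by
    ext Δ
    rw [mem_filter, mem_powerset, subset_compl_iff_disjoint_left]
    exact and_iff_right (mem_univ Δ)
  rw [hfilter]
  have hZ := sum_powerset_neg_one_pow_card_of_nonempty
    (nonempty_iff_ne_empty.mpr ((compl_eq_empty_iff A).not.mpr hA))
  simpa using congrArg (Int.cast : ℤ → R) hZ

namespace CoxeterSystem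

variable {B W : Type*} [Group W] {M : CoxeterMatrix B} (cs : CoxeterSystem M W)

theorem ne_univ_of_finite_closure_simple [Fintype B] [Infinite W] {T : Finset B}
    (hT : (Subgroup.closure (cs.simple '' T) : Set W).Finite) : T ≠ Finset.univ := by
  rintro rfl
  rw [Finset.coe_univ, Set.image_univ, cs.subgroup_closure_range_simple] at hT
  exact Set.infinite_univ hT

/-- A subset of `S` is *spherical* when it generates a finite parabolic subgroup. -/
def sphericalChains : Set (List (Finset B)) :=
  {l | l ≠ [] ∧ l.IsChain (· ⊂ ·) ∧ (Subgroup.closure (cs.simple '' l.getLastI) : Set W).Finite}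

noncomputable def chainWeight (l : List (Finset B)) : ℚ :=
  (-1) ^ (l.length - 1) / Nat.card (Subgroup.closure (cs.simple '' l.headI))

theorem finite_sphericalChains [Finite B] : cs.sphericalChains.Finite :=
  (List.finite_setOf_isChain _).subset fun _ hl => hl.2.1

theorem chainSum_eq_sum_sphericalChains [Finite B] [DecidableEq B] (T : Finset B) :
    chainSum M cs T =
      ∑ l ∈ cs.finite_sphericalChains.toFinset with l.getLastI ⊆ T, cs.chainWeight l := by
  have hchains : {l : List (Finset B) | l ≠ [] ∧ l.IsChain (· ⊂ ·) ∧ (∀ A ∈ l, A ⊆ T) ∧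
      (Subgroup.closure (cs.simple '' l.getLastI) : Set W).Finite} =
      ↑{l ∈ cs.finite_sphericalChains.toFinset | l.getLastI ⊆ T} := by
    ext l
    simp only [Finset.coe_filter, Set.Finite.mem_toFinset, sphericalChains, Set.mem_ofPred_eq]
    constructor
    · rintro ⟨hne, hchain, hsub, hfin⟩
      exact ⟨⟨hne, hchain, hfin⟩, hsub _ (List.getLastI_mem hne)⟩
    · rintro ⟨⟨hne, hchain, hfin⟩, htop⟩
      exact ⟨hne, hchain,
        fun A hA => (List.subset_getLastI_of_isChain_ssubset hchain hA).trans htop, hfin⟩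
  rw [← finsum_mem_coe_finset, ← hchains]
  rfl

end CoxeterSystem

open Finset in
/-- Serre's closed form: for an infinite Coxeter group `(W,S)`,
`Σ_{Δ ⊆ S} (−1)^{|Δ|} E(S∖Δ) = 0`. -/
theorem coxeter_serre_closed_form
    {B : Type*} [Fintype B] [DecidableEq B] {W : Type*} [Group W] [Infinite W]
    (M : CoxeterMatrix B) (cs : CoxeterSystem M W) :
    ∑ Δ : Finset B, (-1 : ℚ) ^ Δ.card * chainSum M cs (Finset.univ \ Δ) = 0 := by
  calc ∑ Δ : Finset B, (-1 : ℚ) ^ Δ.card * chainSum M cs (univ \ Δ)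
      = ∑ Δ : Finset B, ∑ l ∈ cs.finite_sphericalChains.toFinset,
          if Disjoint l.getLastI Δ then (-1) ^ #Δ * cs.chainWeight l else 0 := by
        simp only [cs.chainSum_eq_sum_sphericalChains, mul_sum, sum_filter, subset_sdiff,
          subset_univ, true_and, mul_ite, mul_zero]
    _ = ∑ l ∈ cs.finite_sphericalChains.toFinset,
          (∑ Δ with Disjoint l.getLastI Δ, (-1) ^ #Δ) * cs.chainWeight l := by
        rw [sum_comm]
        simp only [sum_filter, sum_mul, ite_mul, zero_mul]
    _ = 0 := sum_eq_zero fun l hl => by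
        obtain ⟨-, -, htop⟩ := (Set.Finite.mem_toFinset _).mp hl
        rw [sum_filter_disjoint_neg_one_pow_card (cs.ne_univ_of_finite_closure_simple htop),
          zero_mul]
end
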